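/- For matrices X and Y of the same size over a field, rank(X + Y) ≥ rank(X) + rank(Y) − dim(R₁ ∩ R₂) − dim(C₁ ∩ C₂), where R₁, R₂ are the row spaces of X, Y and C₁, C₂ are the column spaces of X, Y. -/

import Mathlib

open Matrix

/-- Marsaglia's lower bound: for matrices `X Y` over a field,
`rank(X + Y) ≥ rank X + rank Y − dim(rowSpace X ⊓ rowSpace Y) − dim(colSpace X ⊓ colSpace Y)`. -/
theorem rank_add_ge_marsaglia {F : Type*} [Field F] {m n : ℕ}
    (X Y : Matrix (Fin m) (Fin n) F) :
    (X.rank : ℤ) + (Y.rank : ℤ)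
      - (Module.finrank F
          ↥(Submodule.span F (Set.range X) ⊓ Submodule.span F (Set.range Y)) : ℤ)
      - (Module.finrank F
          ↥(Submodule.span F (Set.range Xᵀ) ⊓ Submodule.span F (Set.range Yᵀ)) : ℤ)
      ≤ ((X + Y).rank : ℤ) := by
  classical
  set R₁ := Submodule.span F (Set.range X)
  set R₂ := Submodule.span F (Set.range Y)
  set C₁ := Submodule.span F (Set.range Xᵀ)
  set C₂ := Submodule.span F (Set.range Yᵀ)
  set M : Matrix (Fin m ⊕ Fin m) (Fin n) F := Matrix.fromRows X Y with hM
  set f : ((Fin m ⊕ Fin m) → F) →ₗ[F] (Fin m → F) :=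
    LinearMap.funLeft F F Sum.inl + LinearMap.funLeft F F Sum.inr with hf
  set W := LinearMap.range M.mulVecLin with hW
  set φ : ↥W →ₗ[F] (Fin m → F) := f.comp W.subtype with hφ
  -- (X+Y).mulVecLin factors through M
  have hcomp : (X + Y).mulVecLin = f.comp M.mulVecLin := by
    apply LinearMap.ext; intro v
    funext i
    simp [hf, hM, Matrix.mulVecLin_apply, Matrix.add_mulVec, Matrix.fromRows,
      LinearMap.funLeft, Matrix.mulVec, Matrix.of_apply]
    rfl
  have hrange : LinearMap.range ((X + Y).mulVecLin) = LinearMap.range φ := by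
    rw [hcomp, hφ, LinearMap.range_comp, LinearMap.range_comp,
      Submodule.range_subtype]
  -- rank nullity for φ
  have h1 : (X + Y).rank + Module.finrank F (LinearMap.ker φ) = Module.finrank F W := by
    rw [Matrix.rank, hrange]
    exact φ.finrank_range_add_finrank_ker
  -- the kernel of φ embeds into C₁ ⊓ C₂
  have h2 : Module.finrank F (LinearMap.ker φ) ≤ Module.finrank F ↥(C₁ ⊓ C₂) := by
    have hmem : ∀ x : LinearMap.ker φ,
        (fun i => ((x : W) : (Fin m ⊕ Fin m) → F) (Sum.inl i)) ∈ C₁ ⊓ C₂ := by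
      rintro ⟨⟨w, hw⟩, hker⟩
      obtain ⟨v, hv⟩ := hw
      have hker' : f w = 0 := hker
      have hl : (fun i => w (Sum.inl i)) = X.mulVecLin v := by
        funext i
        rw [← hv]
        rfl
      have hr : (fun i => w (Sum.inr i)) = Y.mulVecLin v := by
        funext i
        rw [← hv]
        rfl
      have hC1 : C₁ = LinearMap.range X.mulVecLin := (Matrix.range_mulVecLin X).symm
      have hC2 : C₂ = LinearMap.range Y.mulVecLin := (Matrix.range_mulVecLin Y).symm
      constructor
      · rw [hl]
        show X.mulVecLin v ∈ C₁
        rw [hC1]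
        exact ⟨v, rfl⟩
      · have heq : (fun i => w (Sum.inl i)) = -(Y.mulVecLin v) := by
          funext i
          have hthis := congrFun hker' i
          simp [hf, LinearMap.funLeft] at hthis
          have h2 := congrFun hr i
          simp only [Pi.neg_apply]
          rw [← h2]
          linear_combination hthis
        rw [heq]
        show -(Y.mulVecLin v) ∈ C₂
        rw [hC2]
        exact neg_mem ⟨v, rfl⟩
    let ψ : LinearMap.ker φ →ₗ[F] ↥(C₁ ⊓ C₂) :=
      LinearMap.codRestrict (C₁ ⊓ C₂)
        ((LinearMap.funLeft F F Sum.inl).comp (W.subtype.comp (LinearMap.ker φ).subtype))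
        hmem
    have hinj : Function.Injective ψ := by
      intro x y hxy
      have hxy' : ∀ i, ((x : W) : (Fin m ⊕ Fin m) → F) (Sum.inl i)
          = ((y : W) : (Fin m ⊕ Fin m) → F) (Sum.inl i) := by
        intro i
        exact congrFun (congrArg Subtype.val hxy) i
      have hx : f ((x : W) : (Fin m ⊕ Fin m) → F) = 0 := x.2
      have hy : f ((y : W) : (Fin m ⊕ Fin m) → F) = 0 := y.2
      apply Subtype.ext; apply Subtype.ext
      funext j
      cases j with
      | inl i => exact hxy' i
      | inr i =>
        have hx' := congrFun hx i
        have hy' := congrFun hy i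
        simp [hf, LinearMap.funLeft] at hx' hy'
        have hli := hxy' i
        linear_combination hx' - hy' - hli
    exact LinearMap.finrank_le_finrank_of_injective hinj
  -- finrank W = rank M = dim (R₁ ⊔ R₂)
  have h3 : Module.finrank F W = Module.finrank F ↥(R₁ ⊔ R₂) := by
    have hspan : Submodule.span F (Set.range M) = R₁ ⊔ R₂ := by
      have hru : Set.range M = Set.range X ∪ Set.range Y := by
        ext w
        constructor
        · rintro ⟨i, rfl⟩
          cases i with
          | inl i => exact Or.inl ⟨i, rfl⟩
          | inr i => exact Or.inr ⟨i, rfl⟩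
        · rintro (⟨i, rfl⟩ | ⟨i, rfl⟩)
          · exact ⟨Sum.inl i, rfl⟩
          · exact ⟨Sum.inr i, rfl⟩
      rw [hru, Submodule.span_union]
    have : M.rank = Module.finrank F ↥(R₁ ⊔ R₂) := by
      rw [Matrix.rank_eq_finrank_span_row, Matrix.row, hspan]
    rw [← this]
    rfl
  -- dimension formula for sum of row spaces
  have h5 : Module.finrank F ↥(R₁ ⊔ R₂) + Module.finrank F ↥(R₁ ⊓ R₂)
      = X.rank + Y.rank := by
    rw [Submodule.finrank_sup_add_finrank_inf_eq,
      Matrix.rank_eq_finrank_span_row, Matrix.rank_eq_finrank_span_row]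
    rfl
  -- combine
  have key : X.rank + Y.rank
      ≤ (X + Y).rank + Module.finrank F ↥(R₁ ⊓ R₂) + Module.finrank F ↥(C₁ ⊓ C₂) := by
    omega

  omega
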